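/- Let X, X₁, X₂, … be i.i.d. nonnegative random variables with finite positive mean, and let L be a positive-integer-valued random variable with finite mean, independent of the Xᵢ. If X* ⪯ X and L^e ⪯ L (i.e., X and L are NBUE), then the random sum S = Σ_{k=1}^L X_k satisfies S* ⪯ S, i.e., S is NBUE. -/

import Mathlib

/-!
For `Y ≥ 0` with mean `M`, integrating out the uniform factor gives `P(Y* > t) = E(Y - t)⁺ / M`
for `t ≥ 0`, so `Y` is NBUE iff `E(Y - t)⁺ ≤ M · P(Y > t)` for all `t ≥ 0`.
Splitting off the last summand of `S_{n+1} = S_n + X` and applying this to `X` at the threshold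
`t - S_n` gives `E(S_{n+1} - t)⁺ ≤ E(S_n - t)⁺ + E X · P(S_{n+1} > t)`, hence
`E(S_n - t)⁺ ≤ E X · ∑_{1 ≤ i ≤ n} P(S_i > t)`. Averaging over `L` turns the right side into
`E X · ∑_i P(L ≥ i) P(S_i > t)`. Since `i ↦ P(S_i > t)` is increasing, summation by parts reduces
the comparison of this with `E L · E X · ∑_i P(L = i) P(S_i > t) = E S · P(S > t)` to the
comparison of tails `∑_{n > k} P(L ≥ n) ≤ E L · P(L > k)`, which is the NBUE property of `L`.
-/

open MeasureTheory

/-- The law of `V_a`, with density `a x^(a-1)` on `(0,1]`. -/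
noncomputable def vLaw (a : ℝ) : Measure ℝ :=
  (volume.restrict (Set.Ioc (0 : ℝ) 1)).withDensity
    (fun u => ENNReal.ofReal (a * u ^ (a - 1)))

/-- The `β`-power bias of a law `μ`. -/
noncomputable def powerBias (β : ℝ) (μ : Measure ℝ) : Measure ℝ :=
  μ.withDensity (fun x => ENNReal.ofReal (x ^ β / ∫ y, y ^ β ∂μ))

/-- The `(α,β)`-generalized equilibrium transform of `μ`; for `α = β = 1` this is the
usual equilibrium transform `X* = U·X^s`. -/
noncomputable def eqLaw (α β : ℝ) (μ : Measure ℝ) : Measure ℝ :=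
  ((vLaw α).prod (powerBias β μ)).map (fun p => p.1 * p.2)

/-- Convolution of two laws on `ℝ` (law of the sum of independent variables). -/
noncomputable def mconv (μ ν : Measure ℝ) : Measure ℝ :=
  (μ.prod ν).map (fun p => p.1 + p.2)

/-- Law of `X₁ + ⋯ + Xₙ` for i.i.d. variables with law `μ`. -/
noncomputable def sumLaw (μ : Measure ℝ) : ℕ → Measure ℝ
  | 0 => Measure.dirac 0
  | (n + 1) => mconv (sumLaw μ n) μ

/-- Law of the random sum `S = Σ_{k=1}^L X_k` with `L ~ ν` independent of the i.i.d. `Xᵢ ~ μ`. -/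
noncomputable def randSumLaw (μ : Measure ℝ) (ν : Measure ℕ) : Measure ℝ :=
  Measure.sum (fun k => ν {k} • sumLaw μ k)

open Set
open scoped ENNReal

namespace ENNReal

theorem tsum_mul_sum_range (p g : ℕ → ℝ≥0∞) :
    ∑' k, p k * ∑ i ∈ Finset.range k, g i = ∑' i, (∑' k, if i < k then p k else 0) * g i := by
  have hrange (k : ℕ) : ∑ i ∈ Finset.range k, g i = ∑' i, if i < k then g i else 0 := by
    rw [sum_eq_tsum_indicator]
    exact tsum_congr fun i => by simp [Set.indicator_apply]
  simp_rw [hrange, ← ENNReal.tsum_mul_left, ← ENNReal.tsum_mul_right]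
  rw [ENNReal.tsum_comm]
  exact tsum_congr fun i => tsum_congr fun k => by split_ifs <;> simp

theorem tsum_mul_eq_of_monotone (w : ℕ → ℝ≥0∞) {c : ℕ → ℝ≥0∞} (hc : Monotone c) :
    ∑' n, w n * c n
      = (∑' n, w n) * c 0 + ∑' i, (∑' n, if i < n then w n else 0) * (c (i + 1) - c i) := by
  have hc' (n : ℕ) : c n = c 0 + ∑ i ∈ Finset.range n, (c (i + 1) - c i) := by
    induction n with
    | zero => simp
    | succ n ih =>
      rw [Finset.sum_range_succ, ← add_assoc, ← ih, add_tsub_cancel_of_le (hc n.le_succ)]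
  conv_lhs => enter [1, n]; rw [hc' n, mul_add]
  rw [ENNReal.tsum_add, ENNReal.tsum_mul_right, tsum_mul_sum_range]

theorem tsum_mul_le_of_tail_le {w w' c : ℕ → ℝ≥0∞} (hc : Monotone c)
    (h₀ : ∑' n, w n ≤ ∑' n, w' n)
    (h : ∀ i, ∑' n, (if i < n then w n else 0) ≤ ∑' n, if i < n then w' n else 0) :
    ∑' n, w n * c n ≤ ∑' n, w' n * c n := by
  rw [tsum_mul_eq_of_monotone w hc, tsum_mul_eq_of_monotone w' hc]
  gcongr ?_ * _ + ∑' i, ?_ * _ with i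
  exact h i

end ENNReal

section NatMeasure

variable (ν : Measure ℕ)

theorem tsum_measure_singleton_nat : ∑' n, ν {n} = ν univ := by
  simpa using Measure.tsum_indicator_apply_singleton ν univ MeasurableSet.univ

theorem measure_Ioi_nat (k : ℕ) : ν (Ioi k) = ∑' n, if k < n then ν {n} else 0 := by
  rw [← Measure.tsum_indicator_apply_singleton ν _ measurableSet_Ioi]
  exact tsum_congr fun n => by simp [Set.indicator_apply]

theorem one_le_tsum_mul_measure_singleton [IsProbabilityMeasure ν] (hν0 : ν {0} = 0) :
    1 ≤ ∑' n : ℕ, (n : ℝ≥0∞) * ν {n} := by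
  rw [← measure_univ (μ := ν), ← tsum_measure_singleton_nat]
  refine ENNReal.tsum_le_tsum fun n => ?_
  rcases n with _ | n
  · simp [hν0]
  · exact le_mul_of_one_le_left zero_le (by simp)

theorem tsum_mul_sum_range_le_of_nbue
    (hν : ∀ k : ℕ, (∑' n : ℕ, if k < n then ν (Ici n) else 0)
      ≤ (∑' n : ℕ, (n : ℝ≥0∞) * ν {n}) * ν (Ioi k))
    {c : ℕ → ℝ≥0∞} (hc : Monotone c) :
    ∑' k, ν {k} * ∑ i ∈ Finset.range k, c (i + 1)
      ≤ (∑' n : ℕ, (n : ℝ≥0∞) * ν {n}) * ∑' n, ν {n} * c n := by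
  set Λ := ∑' n : ℕ, (n : ℝ≥0∞) * ν {n}
  have hIoi (i : ℕ) : Ioi i = Ici (i + 1) := (Order.Ici_succ i).symm
  have hw (w : ℕ → ℝ≥0∞) : ∑' n, (if 0 < n then w n else 0) = ∑' i, w (i + 1) := by
    rw [tsum_eq_zero_add' ENNReal.summable]; simp
  have hLHS : ∑' k, ν {k} * ∑ i ∈ Finset.range k, c (i + 1)
      = ∑' n, (if 0 < n then ν (Ici n) else 0) * c n := by
    rw [ENNReal.tsum_mul_sum_range]
    simp_rw [ite_mul, zero_mul, hw, ← measure_Ioi_nat, hIoi]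
  rw [hLHS, ← ENNReal.tsum_mul_left]
  simp_rw [← mul_assoc]
  refine ENNReal.tsum_mul_le_of_tail_le hc ?_ fun k => ?_
  · calc ∑' n, (if 0 < n then ν (Ici n) else 0) ≤ Λ * ν (Ioi 0) := hν 0
      _ ≤ Λ * ∑' n, ν {n} := by
          grw [tsum_measure_singleton_nat, ← measure_mono (subset_univ (Ioi 0))]
      _ = ∑' n, Λ * ν {n} := ENNReal.tsum_mul_left.symm
  · calc ∑' n, (if k < n then (if 0 < n then ν (Ici n) else 0) else 0)
        = ∑' n, if k < n then ν (Ici n) else 0 :=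
          tsum_congr fun n => by split_ifs <;> first | rfl | omega
      _ ≤ Λ * ν (Ioi k) := hν k
      _ = ∑' n, if k < n then Λ * ν {n} else 0 := by
          simp_rw [measure_Ioi_nat, ← ENNReal.tsum_mul_left, mul_ite, mul_zero]

end NatMeasure

noncomputable def stopLoss (σ : Measure ℝ) (t : ℝ) : ℝ≥0∞ := ∫⁻ x, ENNReal.ofReal (x - t) ∂σ

theorem ae_nonneg_of_measure_Iio_zero {σ : Measure ℝ} (h : σ (Iio 0) = 0) : ∀ᵐ x ∂σ, 0 ≤ x := by
  rw [ae_iff]; simp only [not_le]; exact h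

theorem measure_Ioi_of_neg {σ : Measure ℝ} [IsProbabilityMeasure σ] (hσ : ∀ᵐ x ∂σ, 0 ≤ x)
    {t : ℝ} (ht : t < 0) : σ (Ioi t) = 1 := by
  rw [← prob_compl_eq_zero_iff measurableSet_Ioi, compl_Ioi]
  exact measure_mono_null (fun x hx => not_le.2 (lt_of_le_of_lt hx ht)) (ae_iff.1 hσ)

theorem ofReal_mul_volume_Ioc_lt_mul {x : ℝ} (hx : 0 ≤ x) (t : ℝ) :
    ENNReal.ofReal x * volume.restrict (Ioc 0 1) {u | t < u * x}
      = ENNReal.ofReal (x - max t 0) := by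
  rcases hx.eq_or_lt with rfl | hx
  · simp
  have hset : {u | t < u * x} = Ioi (t / x) := by ext u; simp [div_lt_iff₀ hx]
  rw [hset, Measure.restrict_apply measurableSet_Ioi, inter_comm, Ioc_inter_Ioi, Real.volume_Ioc,
    ← ENNReal.ofReal_mul hx.le, mul_sub, mul_one, mul_max_of_nonneg _ _ hx.le,
    mul_div_cancel₀ _ hx.ne', mul_zero, max_comm]

theorem eqLaw_one_one_Ioi {σ : Measure ℝ} [SFinite σ] (hσ : ∀ᵐ x ∂σ, 0 ≤ x)
    (hM : 0 < ∫ x, x ∂σ) (t : ℝ) :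
    eqLaw 1 1 σ (Ioi t) = stopLoss σ (max t 0) / ENNReal.ofReal (∫ x, x ∂σ) := by
  have hmul : Measurable fun p : ℝ × ℝ => p.1 * p.2 := by fun_prop
  have hs : MeasurableSet ((fun p : ℝ × ℝ => p.1 * p.2) ⁻¹' Ioi t) := hmul measurableSet_Ioi
  have hv : vLaw 1 = volume.restrict (Ioc 0 1) := by simp [vLaw]
  simp only [eqLaw, powerBias, Real.rpow_one]
  rw [Measure.map_apply hmul measurableSet_Ioi, hv, Measure.prod_apply_symm hs,
    lintegral_withDensity_eq_lintegral_mul _ (by fun_prop) (measurable_measure_prodMk_right hs),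
    stopLoss, div_eq_mul_inv, ← lintegral_mul_const' _ _ (by simpa using hM)]
  refine lintegral_congr_ae ?_
  filter_upwards [hσ] with x hx
  rw [Pi.mul_apply, ENNReal.ofReal_div_of_pos hM, div_eq_mul_inv, mul_right_comm]
  exact congrArg (· * _) (ofReal_mul_volume_Ioc_lt_mul hx t)

theorem eqLaw_one_one_Ioi_le_iff {σ : Measure ℝ} [SFinite σ] (hσ : ∀ᵐ x ∂σ, 0 ≤ x)
    (hM₀ : ∫⁻ x, ENNReal.ofReal x ∂σ ≠ 0) (hM : ∫⁻ x, ENNReal.ofReal x ∂σ ≠ ∞) (t : ℝ) :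
    eqLaw 1 1 σ (Ioi t) ≤ σ (Ioi t)
      ↔ stopLoss σ (max t 0) ≤ σ (Ioi t) * ∫⁻ x, ENNReal.ofReal x ∂σ := by
  have hint : Integrable (fun x => x) σ :=
    (lintegral_ofReal_ne_top_iff_integrable aestronglyMeasurable_id hσ).1 hM
  have hmean := ofReal_integral_eq_lintegral_ofReal hint hσ
  rw [eqLaw_one_one_Ioi hσ (ENNReal.ofReal_pos.1 (hmean ▸ pos_iff_ne_zero.2 hM₀)), hmean,
    ENNReal.div_le_iff hM₀ hM]

theorem stopLoss_max_le_of_neg {σ : Measure ℝ} [IsProbabilityMeasure σ] (hσ : ∀ᵐ x ∂σ, 0 ≤ x)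
    {t : ℝ} (ht : t < 0) : stopLoss σ (max t 0) ≤ σ (Ioi t) * ∫⁻ x, ENNReal.ofReal x ∂σ := by
  simp [stopLoss, max_eq_right ht.le, measure_Ioi_of_neg hσ ht]

section SumLaw

theorem lintegral_mconv (ρ μ : Measure ℝ) [SFinite μ] {f : ℝ → ℝ≥0∞} (hf : Measurable f) :
    ∫⁻ y, f y ∂mconv ρ μ = ∫⁻ s, ∫⁻ x, f (s + x) ∂μ ∂ρ := by
  rw [mconv, lintegral_map hf (by fun_prop)]
  exact lintegral_prod _ (by fun_prop)

theorem mconv_Ioi (ρ μ : Measure ℝ) [SFinite μ] (t : ℝ) :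
    mconv ρ μ (Ioi t) = ∫⁻ s, μ (Ioi (t - s)) ∂ρ := by
  have hs : MeasurableSet ((fun p : ℝ × ℝ => p.1 + p.2) ⁻¹' Ioi t) :=
    measurableSet_Ioi.preimage (by fun_prop)
  rw [mconv, Measure.map_apply (by fun_prop) measurableSet_Ioi, Measure.prod_apply hs]
  exact lintegral_congr fun s => congrArg μ (Set.ext fun x => by simp [sub_lt_iff_lt_add'])

variable {μ : Measure ℝ}

theorem sumLaw_succ (n : ℕ) : sumLaw μ (n + 1) = mconv (sumLaw μ n) μ := rfl

theorem ae_nonneg_sumLaw (hμ : ∀ᵐ x ∂μ, 0 ≤ x) (n : ℕ) : ∀ᵐ x ∂sumLaw μ n, 0 ≤ x := by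
  induction n with
  | zero => simp [sumLaw]
  | succ n ih =>
    rw [sumLaw_succ, mconv, ae_map_iff (by fun_prop) measurableSet_Ici]
    filter_upwards [Measure.quasiMeasurePreserving_fst.ae ih,
      Measure.quasiMeasurePreserving_snd.ae hμ] with p hs hx
    exact add_nonneg hs hx

variable [IsProbabilityMeasure μ]

instance isProbabilityMeasure_sumLaw (n : ℕ) : IsProbabilityMeasure (sumLaw μ n) := by
  induction n with
  | zero => exact Measure.dirac.isProbabilityMeasure
  | succ n ih => exact Measure.isProbabilityMeasure_map (by fun_prop)

theorem lintegral_ofReal_sumLaw (hμ : ∀ᵐ x ∂μ, 0 ≤ x) (n : ℕ) :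
    ∫⁻ x, ENNReal.ofReal x ∂sumLaw μ n = n * ∫⁻ x, ENNReal.ofReal x ∂μ := by
  induction n with
  | zero => simp [sumLaw]
  | succ n ih =>
    have hs : ∀ᵐ s ∂sumLaw μ n, ∫⁻ x, ENNReal.ofReal (s + x) ∂μ
        = ENNReal.ofReal s + ∫⁻ x, ENNReal.ofReal x ∂μ := by
      filter_upwards [ae_nonneg_sumLaw hμ n] with s hs
      have hx : ∀ᵐ x ∂μ, ENNReal.ofReal (s + x) = ENNReal.ofReal s + ENNReal.ofReal x := by
        filter_upwards [hμ] with x hx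
        exact ENNReal.ofReal_add hs hx
      rw [lintegral_congr_ae hx, lintegral_add_left measurable_const, lintegral_const,
        measure_univ, mul_one]
    rw [sumLaw_succ, lintegral_mconv _ _ ENNReal.measurable_ofReal, lintegral_congr_ae hs,
      lintegral_add_right _ measurable_const, lintegral_const, measure_univ, mul_one, ih]
    push_cast
    ring

theorem sumLaw_Ioi_mono (hμ : ∀ᵐ x ∂μ, 0 ≤ x) (t : ℝ) : Monotone fun n => sumLaw μ n (Ioi t) := by
  refine monotone_nat_of_le_succ fun n => ?_
  rw [sumLaw_succ, mconv_Ioi, ← lintegral_indicator_one measurableSet_Ioi]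
  refine lintegral_mono fun s => ?_
  by_cases hs : s ∈ Ioi t
  · rw [indicator_of_mem hs, Pi.one_apply, measure_Ioi_of_neg hμ (sub_neg.2 hs)]
  · rw [indicator_of_notMem hs]
    exact zero_le

section NBUE

variable {m : ℝ≥0∞} (hμ : ∀ᵐ x ∂μ, 0 ≤ x) (hm : m ≠ ∞)
  (hX : ∀ r, stopLoss μ (max r 0) ≤ μ (Ioi r) * m)
include hμ hm hX

theorem stopLoss_sumLaw_succ_le (n : ℕ) (t : ℝ) :
    stopLoss (sumLaw μ (n + 1)) t ≤ stopLoss (sumLaw μ n) t + sumLaw μ (n + 1) (Ioi t) * m := by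
  have hsplit (s : ℝ) : ∀ᵐ x ∂μ,
      ENNReal.ofReal (s + x - t) = ENNReal.ofReal (s - t) + ENNReal.ofReal (x - max (t - s) 0) := by
    filter_upwards [hμ] with x hx
    rcases le_total t s with hts | hst
    · rw [max_eq_right (by linarith), ← ENNReal.ofReal_add (by linarith) (by linarith)]
      ring_nf
    · rw [max_eq_left (by linarith), ENNReal.ofReal_of_nonpos (sub_nonpos.2 hst), zero_add]
      ring_nf
  calc stopLoss (sumLaw μ (n + 1)) t
      = ∫⁻ s, ∫⁻ x, ENNReal.ofReal (s + x - t) ∂μ ∂sumLaw μ n :=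
        lintegral_mconv _ _ (by fun_prop)
    _ = ∫⁻ s, (ENNReal.ofReal (s - t) + stopLoss μ (max (t - s) 0)) ∂sumLaw μ n := by
        refine lintegral_congr fun s => ?_
        rw [lintegral_congr_ae (hsplit s), lintegral_add_left measurable_const, lintegral_const,
          measure_univ, mul_one, stopLoss]
    _ ≤ ∫⁻ s, (ENNReal.ofReal (s - t) + μ (Ioi (t - s)) * m) ∂sumLaw μ n := by
        gcongr with s
        exact hX _
    _ = stopLoss (sumLaw μ n) t + sumLaw μ (n + 1) (Ioi t) * m := by
        rw [lintegral_add_left (by fun_prop), lintegral_mul_const' _ _ hm, sumLaw_succ, mconv_Ioi,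
          stopLoss]

theorem stopLoss_sumLaw_le {t : ℝ} (ht : 0 ≤ t) (n : ℕ) :
    stopLoss (sumLaw μ n) t ≤ (∑ i ∈ Finset.range n, sumLaw μ (i + 1) (Ioi t)) * m := by
  induction n with
  | zero => simp [stopLoss, sumLaw, ht]
  | succ n ih =>
    calc stopLoss (sumLaw μ (n + 1)) t
        ≤ stopLoss (sumLaw μ n) t + sumLaw μ (n + 1) (Ioi t) * m :=
          stopLoss_sumLaw_succ_le hμ hm hX n t
      _ ≤ (∑ i ∈ Finset.range (n + 1), sumLaw μ (i + 1) (Ioi t)) * m := by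
          rw [Finset.sum_range_succ, add_mul]
          gcongr

end NBUE

end SumLaw

section RandSumLaw

variable {μ : Measure ℝ} {ν : Measure ℕ}

theorem randSumLaw_apply {s : Set ℝ} (hs : MeasurableSet s) :
    randSumLaw μ ν s = ∑' k, ν {k} * sumLaw μ k s := by
  simp [randSumLaw, Measure.sum_apply _ hs]

theorem lintegral_randSumLaw (f : ℝ → ℝ≥0∞) :
    ∫⁻ x, f x ∂randSumLaw μ ν = ∑' k, ν {k} * ∫⁻ x, f x ∂sumLaw μ k := by
  simp [randSumLaw, lintegral_sum_measure]

theorem ae_nonneg_randSumLaw (hμ : ∀ᵐ x ∂μ, 0 ≤ x) : ∀ᵐ x ∂randSumLaw μ ν, 0 ≤ x := by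
  rw [ae_iff, randSumLaw_apply (s := {x | ¬0 ≤ x}) measurableSet_Ici.compl]
  simp only [fun k => ae_iff.1 (ae_nonneg_sumLaw hμ k), mul_zero, tsum_zero]

variable [IsProbabilityMeasure μ]

instance isProbabilityMeasure_randSumLaw [IsProbabilityMeasure ν] :
    IsProbabilityMeasure (randSumLaw μ ν) :=
  ⟨by simp [randSumLaw_apply MeasurableSet.univ, tsum_measure_singleton_nat]⟩

theorem lintegral_ofReal_randSumLaw (hμ : ∀ᵐ x ∂μ, 0 ≤ x) :
    ∫⁻ x, ENNReal.ofReal x ∂randSumLaw μ ν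
      = (∑' n : ℕ, (n : ℝ≥0∞) * ν {n}) * ∫⁻ x, ENNReal.ofReal x ∂μ := by
  simp_rw [lintegral_randSumLaw, lintegral_ofReal_sumLaw hμ, ← ENNReal.tsum_mul_right, mul_comm,
    mul_assoc]

theorem stopLoss_randSumLaw_le {m : ℝ≥0∞} (hμ : ∀ᵐ x ∂μ, 0 ≤ x) (hm : m ≠ ∞)
    (hX : ∀ r, stopLoss μ (max r 0) ≤ μ (Ioi r) * m)
    (hν : ∀ k : ℕ, (∑' n : ℕ, if k < n then ν (Ici n) else 0)
      ≤ (∑' n : ℕ, (n : ℝ≥0∞) * ν {n}) * ν (Ioi k))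
    {t : ℝ} (ht : 0 ≤ t) :
    stopLoss (randSumLaw μ ν) t
      ≤ randSumLaw μ ν (Ioi t) * ((∑' n : ℕ, (n : ℝ≥0∞) * ν {n}) * m) := by
  calc stopLoss (randSumLaw μ ν) t = ∑' k, ν {k} * stopLoss (sumLaw μ k) t :=
        lintegral_randSumLaw _
    _ ≤ ∑' k, ν {k} * ((∑ i ∈ Finset.range k, sumLaw μ (i + 1) (Ioi t)) * m) := by
        gcongr with k
        exact stopLoss_sumLaw_le hμ hm hX ht k
    _ = (∑' k, ν {k} * ∑ i ∈ Finset.range k, sumLaw μ (i + 1) (Ioi t)) * m := by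
        simp_rw [← ENNReal.tsum_mul_right, mul_assoc]
    _ ≤ ((∑' n : ℕ, (n : ℝ≥0∞) * ν {n}) * ∑' k, ν {k} * sumLaw μ k (Ioi t)) * m := by
        gcongr
        exact tsum_mul_sum_range_le_of_nbue ν hν (sumLaw_Ioi_mono hμ t)
    _ = randSumLaw μ ν (Ioi t) * ((∑' n : ℕ, (n : ℝ≥0∞) * ν {n}) * m) := by
        rw [randSumLaw_apply measurableSet_Ioi]
        ring

end RandSumLaw

/-- A random sum of NBUE-many i.i.d. NBUE summands is NBUE.
`X` NBUE means `X* ⪯ X`; `L` NBUE means `L^e ⪯ L`, encoded via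
`P[L^e > k]·E L = Σ_{n>k} P[L ≥ n] ≤ E L · P[L > k]`. -/
theorem stmt12 (μ : Measure ℝ) [IsProbabilityMeasure μ] (ν : Measure ℕ)
    [IsProbabilityMeasure ν]
    (hsupp : μ (Set.Iio 0) = 0) (hint : Integrable id μ) (hmean : 0 < ∫ x, x ∂μ)
    (hL0 : ν {0} = 0) (hLmean : (∑' k : ℕ, (k : ENNReal) * ν {k}) ≠ ⊤)
    (hX : ∀ t : ℝ, eqLaw 1 1 μ {x | t < x} ≤ μ {x | t < x})
    (hL : ∀ k : ℕ, (∑' n : ℕ, if k < n then ν (Set.Ici n) else 0)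
      ≤ (∑' j : ℕ, (j : ENNReal) * ν {j}) * ν (Set.Ioi k)) :
    ∀ t : ℝ, eqLaw 1 1 (randSumLaw μ ν) {x | t < x} ≤ randSumLaw μ ν {x | t < x} := by
  intro t
  have hμ := ae_nonneg_of_measure_Iio_zero hsupp
  obtain ⟨hm₀, hm⟩ : ∫⁻ x, ENNReal.ofReal x ∂μ ≠ 0 ∧ ∫⁻ x, ENNReal.ofReal x ∂μ ≠ ∞ := by
    rw [← ofReal_integral_eq_lintegral_ofReal (f := fun x => x) hint hμ]
    exact ⟨(ENNReal.ofReal_pos.2 hmean).ne', ENNReal.ofReal_ne_top⟩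
  have hXm (r : ℝ) := (eqLaw_one_one_Ioi_le_iff hμ hm₀ hm r).1 (hX r)
  have hΛ₀ : ∑' k : ℕ, (k : ℝ≥0∞) * ν {k} ≠ 0 :=
    (one_pos.trans_le (one_le_tsum_mul_measure_singleton ν hL0)).ne'
  have hσ := ae_nonneg_randSumLaw (ν := ν) hμ
  refine (eqLaw_one_one_Ioi_le_iff hσ ?_ ?_ t).2 ?_ <;> rw [lintegral_ofReal_randSumLaw hμ]
  · exact mul_ne_zero hΛ₀ hm₀
  · exact ENNReal.mul_ne_top hLmean hm
  rcases le_or_gt 0 t with ht | ht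
  · rw [max_eq_left ht]
    exact stopLoss_randSumLaw_le hμ hm hXm hL ht
  · rw [← lintegral_ofReal_randSumLaw hμ]
    exact stopLoss_max_le_of_neg hσ ht
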